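/- arXiv:1802.07322 — 6 statements merged into one kernel-verified Lean document; each statement's English description precedes it below -/
import Mathlib

section
/- One step of structure preservation in Broyden's method: suppose Cᴴ v_k = b₂ and J_k = [[M_k, W_k],[Cᴴ, 0]] is invertible, let Δx_k = (Δv_k, Δw_k) solve J_k Δx_k = −F(x_k) where F((v,w)) = (G(v,w), Cᴴ v − b₂) for some function G, and set v_{k+1} = v_k + γ Δv_k. Then Cᴴ v_{k+1} = b₂, and the Broyden update J_{k+1} = J_k + (1/‖Δx_k‖²) z_{k+1} Δx_kᴴ with z_{k+1} = (1/γ)(F(x_{k+1}) − (1−γ) F(x_k)) again has the form [[M_{k+1}, W_{k+1}],[Cᴴ, 0]], i.e. its last p+1 rows are unchanged. -/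
/-!
The last `p + 1` equations of the Newton system `J_k Δx_k = -F(x_k)` read `Cᴴ Δv_k = b₂ - Cᴴ v_k = 0`,
so the linear constraint `Cᴴ v = b₂` survives any step `v_k + γ Δv_k`. Hence the constraint part of
`F` vanishes at both `x_k` and `x_{k+1}`, so the secant vector `z_{k+1}` has zero bottom block, and the
rank-one Broyden correction `z_{k+1} Δx_kᴴ` leaves the bottom block rows `[Cᴴ, 0]` of `J_k` untouched.
-/

open Matrix

namespace Matrix

variable {R k m₁ m₂ n n₁ n₂ : Type*}

theorem toRows₂_fromBlocks_mul_fromRows [Fintype n₁] [Fintype n₂] [Semiring R]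
    (A : Matrix m₁ n₁ R) (B : Matrix m₁ n₂ R) (C : Matrix m₂ n₁ R) (D : Matrix m₂ n₂ R)
    (x : Matrix n₁ n R) (y : Matrix n₂ n R) :
    toRows₂ (fromBlocks A B C D * fromRows x y) = C * x + D * y := by
  rw [fromBlocks_mul_fromRows, toRows₂_fromRows]

theorem exists_add_smul_mul_eq_fromBlocks_of_toRows₂_eq_zero [Fintype k] [Semiring R]
    (A : Matrix m₁ n₁ R) (B : Matrix m₁ n₂ R) (C : Matrix m₂ n₁ R) (D : Matrix m₂ n₂ R)
    {u : Matrix (m₁ ⊕ m₂) k R} (hu : toRows₂ u = 0) (c : R) (v : Matrix k (n₁ ⊕ n₂) R) :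
    ∃ A' B', fromBlocks A B C D + c • (u * v) = fromBlocks A' B' C D := by
  have hu' : ∀ i j, u (Sum.inr i) j = 0 := fun i j => congrFun₂ hu i j
  refine ⟨toBlocks₁₁ (fromBlocks A B C D + c • (u * v)),
    toBlocks₁₂ (fromBlocks A B C D + c • (u * v)), ?_⟩
  ext (i | i) (j | j) <;> simp [toBlocks₁₁, toBlocks₁₂, mul_apply, hu']

end Matrix

theorem broyden_structure_preservation_general (n p : ℕ)
    (C : Matrix (Fin n) (Fin (p + 1)) ℂ)
    (b₂ : Matrix (Fin (p + 1)) (Fin 1) ℂ)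
    (G : Matrix (Fin n) (Fin 1) ℂ → Matrix (Fin (p + 1)) (Fin 1) ℂ → Matrix (Fin n) (Fin 1) ℂ)
    (F : Matrix (Fin n ⊕ Fin (p + 1)) (Fin 1) ℂ → Matrix (Fin n ⊕ Fin (p + 1)) (Fin 1) ℂ)
    (hF : ∀ x, F x = fromRows (G (x.submatrix Sum.inl id) (x.submatrix Sum.inr id))
      (Cᴴ * x.submatrix Sum.inl id - b₂))
    (vk : Matrix (Fin n) (Fin 1) ℂ) (wk : Matrix (Fin (p + 1)) (Fin 1) ℂ)
    (hvk : Cᴴ * vk = b₂)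
    (Mk : Matrix (Fin n) (Fin n) ℂ) (Wk : Matrix (Fin n) (Fin (p + 1)) ℂ)
    (Δvk : Matrix (Fin n) (Fin 1) ℂ) (Δwk : Matrix (Fin (p + 1)) (Fin 1) ℂ)
    (hsolve : fromBlocks Mk Wk Cᴴ 0 * fromRows Δvk Δwk = -F (fromRows vk wk))
    (γ : ℂ)
    (xk1 : Matrix (Fin n ⊕ Fin (p + 1)) (Fin 1) ℂ)
    (hx1 : xk1 = fromRows vk wk + γ • fromRows Δvk Δwk)
    (zk1 : Matrix (Fin n ⊕ Fin (p + 1)) (Fin 1) ℂ)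
    (hz : zk1 = γ⁻¹ • (F xk1 - (1 - γ) • F (fromRows vk wk)))
    (Jk1 : Matrix (Fin n ⊕ Fin (p + 1)) (Fin n ⊕ Fin (p + 1)) ℂ)
    (hJ1 : Jk1 = fromBlocks Mk Wk Cᴴ 0 +
      (((fromRows Δvk Δwk)ᴴ * fromRows Δvk Δwk) 0 0)⁻¹ • (zk1 * (fromRows Δvk Δwk)ᴴ)) :
    Cᴴ * (vk + γ • Δvk) = b₂ ∧
      ∃ Mk1 Wk1, Jk1 = fromBlocks Mk1 Wk1 Cᴴ 0 := by
  have hres : ∀ x, toRows₂ (F x) = Cᴴ * toRows₁ x - b₂ := fun x => by rw [hF]; rfl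
  have hCΔ : Cᴴ * Δvk = 0 := by
    have h := congrArg toRows₂ hsolve
    rw [toRows₂_fromBlocks_mul_fromRows, Matrix.zero_mul, add_zero] at h
    rw [h, show toRows₂ (-F _) = -toRows₂ (F _) from rfl, hres, toRows₁_fromRows, hvk, sub_self,
      neg_zero]
  have hvk1 : Cᴴ * (vk + γ • Δvk) = b₂ := by
    rw [Matrix.mul_add, Matrix.mul_smul, hCΔ, hvk, smul_zero, add_zero]
  have hxk1 : toRows₁ xk1 = vk + γ • Δvk := by rw [hx1]; rfl
  have hzk1 : toRows₂ zk1 = 0 := by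
    have hz₂ : toRows₂ zk1 =
        γ⁻¹ • (toRows₂ (F xk1) - (1 - γ) • toRows₂ (F (fromRows vk wk))) := by rw [hz]; rfl
    rw [hz₂, hres, hres, hxk1, toRows₁_fromRows, hvk1, hvk, sub_self, smul_zero, sub_zero,
      smul_zero]
  exact ⟨hvk1, hJ1 ▸ exists_add_smul_mul_eq_fromBlocks_of_toRows₂_eq_zero _ _ _ _ hzk1 _ _⟩

/-- One step of structure preservation in Broyden's method: the normalization
`Cᴴ v = b₂` and the block structure of the Jacobian (i.e. its last `p+1` rows)
are preserved under the Broyden update. -/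
theorem broyden_structure_preservation (n p : ℕ)
    (C : Matrix (Fin n) (Fin (p + 1)) ℂ)
    (b₂ : Matrix (Fin (p + 1)) (Fin 1) ℂ)
    (G : Matrix (Fin n) (Fin 1) ℂ → Matrix (Fin (p + 1)) (Fin 1) ℂ → Matrix (Fin n) (Fin 1) ℂ)
    (F : Matrix (Fin n ⊕ Fin (p + 1)) (Fin 1) ℂ → Matrix (Fin n ⊕ Fin (p + 1)) (Fin 1) ℂ)
    (hF : ∀ x, F x = fromRows (G (x.submatrix Sum.inl id) (x.submatrix Sum.inr id))
      (Cᴴ * x.submatrix Sum.inl id - b₂))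
    (vk : Matrix (Fin n) (Fin 1) ℂ) (wk : Matrix (Fin (p + 1)) (Fin 1) ℂ)
    (hvk : Cᴴ * vk = b₂)
    (Mk : Matrix (Fin n) (Fin n) ℂ) (Wk : Matrix (Fin n) (Fin (p + 1)) ℂ)
    (hJk : IsUnit (fromBlocks Mk Wk Cᴴ 0).det)
    (Δvk : Matrix (Fin n) (Fin 1) ℂ) (Δwk : Matrix (Fin (p + 1)) (Fin 1) ℂ)
    (hΔ : fromRows Δvk Δwk ≠ 0)
    (hsolve : fromBlocks Mk Wk Cᴴ 0 * fromRows Δvk Δwk = -F (fromRows vk wk))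
    (γ : ℂ) (hγ : γ ≠ 0)
    (xk1 : Matrix (Fin n ⊕ Fin (p + 1)) (Fin 1) ℂ)
    (hx1 : xk1 = fromRows vk wk + γ • fromRows Δvk Δwk)
    (zk1 : Matrix (Fin n ⊕ Fin (p + 1)) (Fin 1) ℂ)
    (hz : zk1 = γ⁻¹ • (F xk1 - (1 - γ) • F (fromRows vk wk)))
    (Jk1 : Matrix (Fin n ⊕ Fin (p + 1)) (Fin n ⊕ Fin (p + 1)) ℂ)
    (hJ1 : Jk1 = fromBlocks Mk Wk Cᴴ 0 +
      (((fromRows Δvk Δwk)ᴴ * fromRows Δvk Δwk) 0 0)⁻¹ • (zk1 * (fromRows Δvk Δwk)ᴴ)) :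
    Cᴴ * (vk + γ • Δvk) = b₂ ∧
      ∃ Mk1 Wk1, Jk1 = fromBlocks Mk1 Wk1 Cᴴ 0 :=
  broyden_structure_preservation_general n p C b₂ G F hF vk wk hvk Mk Wk Δvk Δwk hsolve γ xk1 hx1
    zk1 hz Jk1 hJ1
end

section
/- Explicit solution of the extended NEP: suppose (X,S) satisfies the invariant pair relation for the polynomial NEP M(λ) = Σᵢ Mᵢ λⁱ, X has orthonormal columns (XᴴX = I), M(λ₁)v₁ = 0, and λ₁ ∉ spectrum(S). Then v := (I − XXᴴ)v₁, u := (λ₁ I − S) Xᴴ v₁ satisfy M(λ₁) v + U(λ₁) u = 0 and Xᴴ v = 0, where U(λ) = M(λ) X (λI − S)⁻¹. -/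
open Matrix

/-
Write `A = M(λ₁)` and `T = λ₁ I - S`. Since `T⁻¹ T = I`, the term `U(λ₁) u` collapses to
`A X Xᴴ v₁`, which is exactly what `A v = A v₁ - A X Xᴴ v₁` lacks to become `A v₁ = 0`; and
`Xᴴ X = I` makes `I - X Xᴴ` annihilated by `Xᴴ`.
-/

theorem mul_nonsing_inv_mulVec_mulVec_cancel {R : Type*} [CommRing R] {l n : Type*} [Fintype n]
    [DecidableEq n] (B : Matrix l n R) {T : Matrix n n R} (hT : IsUnit T.det)
    (w : n → R) : (B * T⁻¹) *ᵥ (T *ᵥ w) = B *ᵥ w := by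
  rw [mulVec_mulVec, nonsing_inv_mul_cancel_right T B hT]

theorem mulVec_sub_mulVec_add_mul_mulVec {R : Type*} [CommRing R] {l m n : Type*} [Fintype m]
    [Fintype n] (A : Matrix l m R) (X : Matrix m n R) (v : m → R)
    (w : n → R) : A *ᵥ (v - X *ᵥ w) + (A * X) *ᵥ w = A *ᵥ v := by
  rw [mulVec_sub, mulVec_mulVec, sub_add_cancel]

theorem conjTranspose_mulVec_sub_mulVec_conjTranspose_mulVec {R : Type*} [CommRing R]
    [StarRing R] {m n : Type*} [Fintype m] [Fintype n] [DecidableEq n] {X : Matrix m n R}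
    (hX : Xᴴ * X = 1) (v : m → R) : Xᴴ *ᵥ (v - X *ᵥ (Xᴴ *ᵥ v)) = 0 := by
  rw [mulVec_sub, mulVec_mulVec, hX, one_mulVec, sub_self]

theorem extended_nep_solution_general (n p m : ℕ)
    (M : ℕ → Matrix (Fin n) (Fin n) ℂ)
    (X : Matrix (Fin n) (Fin p) ℂ) (S : Matrix (Fin p) (Fin p) ℂ)
    (hX : Xᴴ * X = 1)
    (v₁ : Fin n → ℂ) (lam₁ : ℂ)
    (hEig : (∑ i ∈ Finset.range (m + 1), lam₁ ^ i • M i) *ᵥ v₁ = 0)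
    (hS : IsUnit (lam₁ • (1 : Matrix (Fin p) (Fin p) ℂ) - S).det)
    (v : Fin n → ℂ) (hv : v = v₁ - X *ᵥ (Xᴴ *ᵥ v₁))
    (u : Fin p → ℂ)
    (hu : u = (lam₁ • (1 : Matrix (Fin p) (Fin p) ℂ) - S) *ᵥ (Xᴴ *ᵥ v₁)) :
    (∑ i ∈ Finset.range (m + 1), lam₁ ^ i • M i) *ᵥ v +
      ((∑ i ∈ Finset.range (m + 1), lam₁ ^ i • M i) * X *
        (lam₁ • (1 : Matrix (Fin p) (Fin p) ℂ) - S)⁻¹) *ᵥ u = 0 ∧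
      Xᴴ *ᵥ v = 0 := by
  subst hv hu
  refine ⟨?_, conjTranspose_mulVec_sub_mulVec_conjTranspose_mulVec hX v₁⟩
  rw [mul_nonsing_inv_mulVec_mulVec_cancel _ hS, mulVec_sub_mulVec_add_mul_mulVec, hEig]

/-- Explicit solution of the extended (deflated) NEP. -/
theorem extended_nep_solution (n p m : ℕ)
    (M : ℕ → Matrix (Fin n) (Fin n) ℂ)
    (X : Matrix (Fin n) (Fin p) ℂ) (S : Matrix (Fin p) (Fin p) ℂ)
    (hpair : ∑ i ∈ Finset.range (m + 1), M i * X * S ^ i = 0)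
    (hX : Xᴴ * X = 1)
    (v₁ : Fin n → ℂ) (lam₁ : ℂ)
    (hEig : (∑ i ∈ Finset.range (m + 1), lam₁ ^ i • M i) *ᵥ v₁ = 0)
    (hS : IsUnit (lam₁ • (1 : Matrix (Fin p) (Fin p) ℂ) - S).det)
    (v : Fin n → ℂ) (hv : v = v₁ - X *ᵥ (Xᴴ *ᵥ v₁))
    (u : Fin p → ℂ)
    (hu : u = (lam₁ • (1 : Matrix (Fin p) (Fin p) ℂ) - S) *ᵥ (Xᴴ *ᵥ v₁)) :
    (∑ i ∈ Finset.range (m + 1), lam₁ ^ i • M i) *ᵥ v +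
      ((∑ i ∈ Finset.range (m + 1), lam₁ ^ i • M i) * X *
        (lam₁ • (1 : Matrix (Fin p) (Fin p) ℂ) - S)⁻¹) *ᵥ u = 0 ∧
      Xᴴ *ᵥ v = 0 :=
  extended_nep_solution_general n p m M X S hX v₁ lam₁ hEig hS v hv u hu
end

section
/- Jacobian singularity — sufficiency of a Jordan chain: under the assumptions of the setting below, if there exists v₂ ∈ ℂⁿ with M(λ₁)v₂ + M'(λ₁)v₁ = 0, then the (n+p+1)×(n+p+1) matrix J = [[M(λ₁), U(λ₁), M'(λ₁)v + U'(λ₁)u],[Xᴴ, 0, 0],[cᴴ, 0, 0]] is singular, where v = (I−XXᴴ)v₁ and u = (λ₁I−S)Xᴴv₁. -/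
open Matrix

/-!
The Jordan chain yields an explicit kernel vector of `J`. Since `[Xᴴ; cᴴ]·[X, v₁]` is invertible,
`v₂` can be corrected by a combination `X t + β v₁` of the columns of `[X, v₁]` so that
`x = X t + β v₁ - v₂` is annihilated by `Xᴴ` and `cᴴ`. The last column of `J` simplifies to
`M'(λ₁) v₁ - U(λ₁) Xᴴ v₁`, and since `U(λ₁)(λ₁I - S) = M(λ₁) X`, `M(λ₁) v₁ = 0` and
`M(λ₁) v₂ = -M'(λ₁) v₁`, it equals `M(λ₁) x + U(λ₁) y` for `y = -(λ₁I - S) t - Xᴴ v₁`.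
Hence `(x, y, -1)` lies in the kernel of `J`.
-/

namespace Matrix

variable {R : Type*} [CommRing R] {m n p : Type*} [Fintype p]

lemma not_isUnit_det_of_mulVec_eq_zero [Fintype n] [DecidableEq n] {A : Matrix n n R} {w : n → R}
    (hw : w ≠ 0) (hAw : A *ᵥ w = 0) : ¬ IsUnit A.det := fun hA =>
  hw <| mulVec_injective_of_isUnit ((isUnit_iff_isUnit_det A).2 hA) (by rw [hAw, mulVec_zero])

lemma not_isUnit_det_fromBlocks_replicateCol [Nontrivial R] [Fintype n] [DecidableEq n]
    [DecidableEq p]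
    (K : Matrix n n R) (U : Matrix n p R) (F : Matrix (p ⊕ Fin 1) n R) {g x : n → R} {y : p → R}
    (hg : K *ᵥ x + U *ᵥ y = g) (hF : F *ᵥ x = 0) :
    ¬ IsUnit (fromBlocks K (fromCols U (replicateCol (Fin 1) g)) F 0).det := by
  set w : n ⊕ (p ⊕ Fin 1) → R := Sum.elim x (Sum.elim y fun _ => -1)
  have hw : w ≠ 0 := fun h => by simpa [w] using congr_fun h (Sum.inr (Sum.inr 0))
  refine not_isUnit_det_of_mulVec_eq_zero hw ?_
  have hcol : replicateCol (Fin 1) g *ᵥ (fun _ => (-1 : R)) = -g := by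
    ext; simp [mulVec, dotProduct]
  have hx : w ∘ Sum.inl = x := rfl
  have hyz : w ∘ Sum.inr = Sum.elim y fun _ => -1 := rfl
  rw [fromBlocks_mulVec, hx, hyz, fromCols_mulVec_sumElim, hcol, hF, zero_mulVec, add_zero,
    ← add_assoc, hg, add_neg_cancel]
  ext (i | i) <;> rfl

lemma exists_mulVec_mulVec_sub_eq_zero [Fintype m] [Fintype n] [DecidableEq m] {F : Matrix m n R}
    {G : Matrix n m R} (hFG : IsUnit (F * G).det) (y : n → R) :
    ∃ z, F *ᵥ (G *ᵥ z - y) = 0 :=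
  ⟨(F * G)⁻¹ *ᵥ (F *ᵥ y), by
    rw [mulVec_sub, mulVec_mulVec, mulVec_mulVec, mul_nonsing_inv _ hFG, one_mulVec, sub_self]⟩

/-- `-(B A⁻²) + C A⁻¹` is the derivative of `λ ↦ B(λ) (λI - S)⁻¹` with `A = λI - S`, `C = B'(λ)`. -/
lemma neg_mul_inv_sq_add_mul_inv_mul [DecidableEq p] {A : Matrix p p R} (hA : IsUnit A.det)
    (B C : Matrix n p R) : (-(B * A⁻¹ ^ 2) + C * A⁻¹) * A = C - B * A⁻¹ := by
  rw [Matrix.add_mul, Matrix.neg_mul, sq, ← Matrix.mul_assoc,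
    nonsing_inv_mul_cancel_right A _ hA, nonsing_inv_mul_cancel_right A _ hA, neg_add_eq_sub]

end Matrix

theorem jacobian_singular_of_jordan_chain_general (n p : ℕ)
    (M M' : ℂ → Matrix (Fin n) (Fin n) ℂ)
    (X : Matrix (Fin n) (Fin p) ℂ) (S : Matrix (Fin p) (Fin p) ℂ)
    (lam₁ : ℂ)
    (hS : IsUnit (lam₁ • (1 : Matrix (Fin p) (Fin p) ℂ) - S).det)
    (v₁ : Fin n → ℂ) (hv₁ : M lam₁ *ᵥ v₁ = 0)
    (c : Fin n → ℂ)
    (hBord : IsUnit ((fromRows Xᴴ (Matrix.replicateRow (Fin 1) (star c)) *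
      fromCols X (Matrix.replicateCol (Fin 1) v₁)).det))
    (U U' : Matrix (Fin n) (Fin p) ℂ)
    (hU : U = M lam₁ * X * (lam₁ • (1 : Matrix (Fin p) (Fin p) ℂ) - S)⁻¹)
    (hU' : U' = -(M lam₁ * X * ((lam₁ • (1 : Matrix (Fin p) (Fin p) ℂ) - S)⁻¹ ^ 2))
      + M' lam₁ * X * (lam₁ • (1 : Matrix (Fin p) (Fin p) ℂ) - S)⁻¹)
    (v : Fin n → ℂ) (hv : v = v₁ - X *ᵥ (Xᴴ *ᵥ v₁))
    (u : Fin p → ℂ)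
    (hu : u = (lam₁ • (1 : Matrix (Fin p) (Fin p) ℂ) - S) *ᵥ (Xᴴ *ᵥ v₁))
    (J : Matrix (Fin n ⊕ (Fin p ⊕ Fin 1)) (Fin n ⊕ (Fin p ⊕ Fin 1)) ℂ)
    (hJ : J = fromBlocks (M lam₁)
      (fromCols U (Matrix.replicateCol (Fin 1) (M' lam₁ *ᵥ v + U' *ᵥ u)))
      (fromRows Xᴴ (Matrix.replicateRow (Fin 1) (star c))) 0)
    (v₂ : Fin n → ℂ) (hchain : M lam₁ *ᵥ v₂ + M' lam₁ *ᵥ v₁ = 0) :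
    ¬ IsUnit J.det := by
  set A := lam₁ • (1 : Matrix (Fin p) (Fin p) ℂ) - S
  set q := Xᴴ *ᵥ v₁
  obtain ⟨z, hz⟩ := exists_mulVec_mulVec_sub_eq_zero hBord v₂
  set t := z ∘ Sum.inl
  have hUA : U * A = M lam₁ * X := by rw [hU, nonsing_inv_mul_cancel_right A _ hS]
  have hcol : M' lam₁ *ᵥ v + U' *ᵥ u = M' lam₁ *ᵥ v₁ - U *ᵥ q := by
    rw [hv, hu, mulVec_mulVec q U', hU', neg_mul_inv_sq_add_mul_inv_mul hS, ← hU, mulVec_sub,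
      sub_mulVec, mulVec_mulVec q, sub_add_sub_cancel]
  have hMG : M lam₁ *ᵥ (fromCols X (replicateCol (Fin 1) v₁) *ᵥ z) = (M lam₁ * X) *ᵥ t := by
    rw [mulVec_mulVec, mul_fromCols, ← replicateCol_mulVec, hv₁, replicateCol_zero,
      fromCols_mulVec, zero_mulVec, add_zero]
  rw [hJ]
  refine not_isUnit_det_fromBlocks_replicateCol _ _ _ (x := _ - v₂) (y := -(A *ᵥ t) - q) ?_ hz
  rw [hcol, mulVec_sub, hMG, mulVec_sub, mulVec_neg, mulVec_mulVec, hUA]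
  linear_combination (norm := module) -hchain

/-- Jacobian singularity — sufficiency: a Jordan chain of length two at
`(lam₁, v₁)` makes the Jacobian of the deflated extended system singular. -/
theorem jacobian_singular_of_jordan_chain (n p : ℕ)
    (M M' : ℂ → Matrix (Fin n) (Fin n) ℂ)
    (X : Matrix (Fin n) (Fin p) ℂ) (S : Matrix (Fin p) (Fin p) ℂ)
    (hX : Xᴴ * X = 1)
    (lam₁ : ℂ)
    (hM' : ∀ i j, HasDerivAt (fun lam => M lam i j) (M' lam₁ i j) lam₁)
    (hS : IsUnit (lam₁ • (1 : Matrix (Fin p) (Fin p) ℂ) - S).det)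
    (v₁ : Fin n → ℂ) (hv₁ : M lam₁ *ᵥ v₁ = 0)
    (c : Fin n → ℂ)
    (hBord : IsUnit ((fromRows Xᴴ (Matrix.replicateRow (Fin 1) (star c)) *
      fromCols X (Matrix.replicateCol (Fin 1) v₁)).det))
    (U U' : Matrix (Fin n) (Fin p) ℂ)
    (hU : U = M lam₁ * X * (lam₁ • (1 : Matrix (Fin p) (Fin p) ℂ) - S)⁻¹)
    (hU' : U' = -(M lam₁ * X * ((lam₁ • (1 : Matrix (Fin p) (Fin p) ℂ) - S)⁻¹ ^ 2))
      + M' lam₁ * X * (lam₁ • (1 : Matrix (Fin p) (Fin p) ℂ) - S)⁻¹)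
    (v : Fin n → ℂ) (hv : v = v₁ - X *ᵥ (Xᴴ *ᵥ v₁))
    (u : Fin p → ℂ)
    (hu : u = (lam₁ • (1 : Matrix (Fin p) (Fin p) ℂ) - S) *ᵥ (Xᴴ *ᵥ v₁))
    (J : Matrix (Fin n ⊕ (Fin p ⊕ Fin 1)) (Fin n ⊕ (Fin p ⊕ Fin 1)) ℂ)
    (hJ : J = fromBlocks (M lam₁)
      (fromCols U (Matrix.replicateCol (Fin 1) (M' lam₁ *ᵥ v + U' *ᵥ u)))
      (fromRows Xᴴ (Matrix.replicateRow (Fin 1) (star c))) 0)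
    (v₂ : Fin n → ℂ) (hchain : M lam₁ *ᵥ v₂ + M' lam₁ *ᵥ v₁ = 0) :
    ¬ IsUnit J.det :=
  jacobian_singular_of_jordan_chain_general n p M M' X S lam₁ hS v₁ hv₁ c hBord U U' hU hU' v hv u
    hu J hJ v₂ hchain
end

section
/- Jacobian singularity — necessity: under the same setting, if the Jacobian J = [[M(λ₁), U(λ₁), M'(λ₁)v + U'(λ₁)u],[Xᴴ,0,0],[cᴴ,0,0]] is singular and, in addition, the null space of M(λ₁) is one-dimensional spanned by v₁ and [Xᴴ;cᴴ][X, v₁] is invertible, then there exists v₂ with M(λ₁)v₂ + M'(λ₁)v₁ = 0 (i.e. M'(λ₁)v₁ lies in the range of M(λ₁)). -/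
open Matrix

/-!
A nonzero kernel vector `(x, y, β)` of the Jacobian satisfies `Xᴴx = 0`, `cᴴx = 0` and
`M(λ₁)(x + X(λ₁I - S)⁻¹y) + β(M'(λ₁)v + U'(λ₁)u) = 0`. If `β = 0`, then
`x + X(λ₁I - S)⁻¹y` is a multiple `αv₁` of `v₁`, and the invertibility of `[Xᴴ; cᴴ][X, v₁]`
forces `α = 0` and `y = 0`, hence `x = 0`. So `β ≠ 0` and the last column of the Jacobian lies
in the range of `M(λ₁)`; that column equals `M'(λ₁)v₁ - M(λ₁)X(λ₁I - S)⁻¹Xᴴv₁`, so `M'(λ₁)v₁`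
lies in that range as well.
-/

namespace Matrix

variable {K : Type*} [Field K] {m p : Type*}

theorem replicateCol_mulVec_const (w : m → K) (β : K) :
    replicateCol (Fin 1) w *ᵥ (fun _ => β) = β • w := by
  ext i
  simp [mulVec, dotProduct, mul_comm]

theorem fromBlocks_fromCols_replicateCol_mulVec [Fintype m] [Fintype p] (A : Matrix m m K)
    (B : Matrix m p K) (w : m → K) (C : Matrix (p ⊕ Fin 1) m K) (x : m → K) (y : p → K)
    (β : K) :
    fromBlocks A (fromCols B (replicateCol (Fin 1) w)) C 0 *ᵥ Sum.elim x (Sum.elim y fun _ => β)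
      = Sum.elim (A *ᵥ x + B *ᵥ y + β • w) (C *ᵥ x) := by
  simp only [fromBlocks_mulVec, Sum.elim_comp_inl, Sum.elim_comp_inr, fromCols_mulVec_sumElim,
    replicateCol_mulVec_const, zero_mulVec, add_zero, add_assoc]

theorem eq_zero_of_mulVec_add_eq_zero_of_isUnit_det_bordered [Fintype m] [Fintype p]
    [DecidableEq p] {A : Matrix m m K} {X : Matrix m p K} {C : Matrix (p ⊕ Fin 1) m K}
    {v₁ : m → K} (hker : ∀ w : m → K, A *ᵥ w = 0 → ∃ α : K, w = α • v₁)
    (hBord : IsUnit (C * fromCols X (replicateCol (Fin 1) v₁)).det)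
    {x : m → K} {t : p → K} (hA : A *ᵥ (x + X *ᵥ t) = 0) (hC : C *ᵥ x = 0) :
    x = 0 ∧ t = 0 := by
  obtain ⟨α, hα⟩ := hker _ hA
  have hx : x = α • v₁ - X *ᵥ t := eq_sub_of_add_eq hα
  have hB : (C * fromCols X (replicateCol (Fin 1) v₁)) *ᵥ Sum.elim (-t) (fun _ => α) = 0 := by
    rw [← mulVec_mulVec, fromCols_mulVec_sumElim, replicateCol_mulVec_const, mulVec_neg,
      neg_add_eq_sub, ← hx, hC]
  have hzero := mulVec_injective_iff_isUnit.mpr ((isUnit_iff_isUnit_det _).mpr hBord)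
    (hB.trans (mulVec_zero _).symm)
  have ht : t = 0 := by ext i; simpa using congrFun hzero (Sum.inl i)
  have hα0 : α = 0 := congrFun hzero (Sum.inr 0)
  exact ⟨by rw [hx, ht, hα0, zero_smul, mulVec_zero, sub_zero], ht⟩

theorem exists_mulVec_eq_of_not_isUnit_det_fromBlocks [Fintype m] [Fintype p] [DecidableEq m]
    [DecidableEq p] {A : Matrix m m K} {X : Matrix m p K} {C : Matrix (p ⊕ Fin 1) m K}
    {v₁ : m → K} (hker : ∀ w : m → K, A *ᵥ w = 0 → ∃ α : K, w = α • v₁)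
    (hBord : IsUnit (C * fromCols X (replicateCol (Fin 1) v₁)).det)
    {R : Matrix p p K} (hR : IsUnit R.det) {w : m → K}
    (hsing : ¬ IsUnit (fromBlocks A (fromCols (A * X * R) (replicateCol (Fin 1) w)) C 0).det) :
    ∃ y, A *ᵥ y = w := by
  obtain ⟨z, hz0, hz⟩ :=
    exists_mulVec_eq_zero_iff.mpr (by simpa [isUnit_iff_ne_zero] using hsing)
  obtain ⟨x, y, β, rfl⟩ : ∃ x y β, z = Sum.elim x (Sum.elim y fun _ => β) :=
    ⟨z ∘ .inl, z ∘ .inr ∘ .inl, z (.inr (.inr 0)), by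
      ext (i | i | i) <;> simp [Fin.fin_one_eq_zero]⟩
  rw [fromBlocks_fromCols_replicateCol_mulVec] at hz
  have hA : A *ᵥ (x + X *ᵥ (R *ᵥ y)) + β • w = 0 := by
    rw [mulVec_add, mulVec_mulVec, mulVec_mulVec]
    exact funext fun i => congrFun hz (.inl i)
  have hC : C *ᵥ x = 0 := funext fun i => congrFun hz (.inr i)
  by_cases hβ : β = 0
  · rw [hβ, zero_smul, add_zero] at hA
    obtain ⟨rfl, hRy⟩ := eq_zero_of_mulVec_add_eq_zero_of_isUnit_det_bordered hker hBord hA hC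
    have hy : y = 0 := mulVec_injective_iff_isUnit.mpr ((isUnit_iff_isUnit_det _).mpr hR)
      (hRy.trans (mulVec_zero _).symm)
    exact (hz0 (by rw [hy, hβ]; ext (i | i | i) <;> rfl)).elim
  · refine ⟨-β⁻¹ • (x + X *ᵥ (R *ᵥ y)), ?_⟩
    rw [mulVec_smul, eq_neg_of_add_eq_zero_left hA, neg_smul, smul_neg, neg_neg, smul_smul,
      inv_mul_cancel₀ hβ, one_smul]

end Matrix

theorem deflated_derivative_mulVec_eq {K m p : Type*} [Field K] [Fintype m] [Fintype p]
    [DecidableEq p] (A A' : Matrix m m K) (X : Matrix m p K) {T : Matrix p p K} (hT : IsUnit T.det)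
    (v₁ : m → K) (s : p → K) :
    A' *ᵥ (v₁ - X *ᵥ s) + (-(A * X * T⁻¹ ^ 2) + A' * X * T⁻¹) *ᵥ (T *ᵥ s)
      = A' *ᵥ v₁ - (A * X * T⁻¹) *ᵥ s := by
  have hcol : (-(A * X * T⁻¹ ^ 2) + A' * X * T⁻¹) * T = -(A * X * T⁻¹) + A' * X := by
    simp only [pow_two, Matrix.add_mul, Matrix.neg_mul, Matrix.mul_assoc, nonsing_inv_mul _ hT,
      Matrix.mul_one]
  rw [mulVec_mulVec, hcol, mulVec_sub, add_mulVec, neg_mulVec, mulVec_mulVec]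
  abel

theorem jordan_chain_of_jacobian_singular_general (n p : ℕ)
    (M M' : ℂ → Matrix (Fin n) (Fin n) ℂ)
    (X : Matrix (Fin n) (Fin p) ℂ) (S : Matrix (Fin p) (Fin p) ℂ)
    (lam₁ : ℂ)
    (hS : IsUnit (lam₁ • (1 : Matrix (Fin p) (Fin p) ℂ) - S).det)
    (v₁ : Fin n → ℂ)
    (hker : ∀ w : Fin n → ℂ, M lam₁ *ᵥ w = 0 → ∃ α : ℂ, w = α • v₁)
    (c : Fin n → ℂ)
    (hBord : IsUnit ((fromRows Xᴴ (Matrix.replicateRow (Fin 1) (star c)) *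
      fromCols X (Matrix.replicateCol (Fin 1) v₁)).det))
    (U U' : Matrix (Fin n) (Fin p) ℂ)
    (hU : U = M lam₁ * X * (lam₁ • (1 : Matrix (Fin p) (Fin p) ℂ) - S)⁻¹)
    (hU' : U' = -(M lam₁ * X * ((lam₁ • (1 : Matrix (Fin p) (Fin p) ℂ) - S)⁻¹ ^ 2))
      + M' lam₁ * X * (lam₁ • (1 : Matrix (Fin p) (Fin p) ℂ) - S)⁻¹)
    (v : Fin n → ℂ) (hv : v = v₁ - X *ᵥ (Xᴴ *ᵥ v₁))
    (u : Fin p → ℂ)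
    (hu : u = (lam₁ • (1 : Matrix (Fin p) (Fin p) ℂ) - S) *ᵥ (Xᴴ *ᵥ v₁))
    (J : Matrix (Fin n ⊕ (Fin p ⊕ Fin 1)) (Fin n ⊕ (Fin p ⊕ Fin 1)) ℂ)
    (hJ : J = fromBlocks (M lam₁)
      (fromCols U (Matrix.replicateCol (Fin 1) (M' lam₁ *ᵥ v + U' *ᵥ u)))
      (fromRows Xᴴ (Matrix.replicateRow (Fin 1) (star c))) 0)
    (hsing : ¬ IsUnit J.det) :
    ∃ v₂ : Fin n → ℂ, M lam₁ *ᵥ v₂ + M' lam₁ *ᵥ v₁ = 0 := by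
  set T := lam₁ • (1 : Matrix (Fin p) (Fin p) ℂ) - S
  obtain ⟨y, hy⟩ := exists_mulVec_eq_of_not_isUnit_det_fromBlocks hker hBord
    (isUnit_nonsing_inv_det T hS) (hU ▸ hJ ▸ hsing)
  rw [hU', hv, hu, deflated_derivative_mulVec_eq _ _ _ hS] at hy
  refine ⟨-(y + X *ᵥ (T⁻¹ *ᵥ (Xᴴ *ᵥ v₁))), ?_⟩
  simp only [mulVec_neg, mulVec_add, hy, mulVec_mulVec, Matrix.mul_assoc]
  abel

/-- Jacobian singularity — necessity: if the Jacobian of the deflated extended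
system is singular, the kernel of `M(λ₁)` is spanned by `v₁`, and the bordered
matrix `[Xᴴ;cᴴ][X, v₁]` is invertible, then there is a Jordan chain of length
two, i.e. `M'(λ₁)v₁` lies in the range of `M(λ₁)`. -/
theorem jordan_chain_of_jacobian_singular (n p : ℕ)
    (M M' : ℂ → Matrix (Fin n) (Fin n) ℂ)
    (X : Matrix (Fin n) (Fin p) ℂ) (S : Matrix (Fin p) (Fin p) ℂ)
    (hX : Xᴴ * X = 1)
    (lam₁ : ℂ)
    (hM' : ∀ i j, HasDerivAt (fun lam => M lam i j) (M' lam₁ i j) lam₁)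
    (hS : IsUnit (lam₁ • (1 : Matrix (Fin p) (Fin p) ℂ) - S).det)
    (v₁ : Fin n → ℂ) (hv₁ : M lam₁ *ᵥ v₁ = 0) (hv₁ne : v₁ ≠ 0)
    (hker : ∀ w : Fin n → ℂ, M lam₁ *ᵥ w = 0 → ∃ α : ℂ, w = α • v₁)
    (c : Fin n → ℂ)
    (hBord : IsUnit ((fromRows Xᴴ (Matrix.replicateRow (Fin 1) (star c)) *
      fromCols X (Matrix.replicateCol (Fin 1) v₁)).det))
    (U U' : Matrix (Fin n) (Fin p) ℂ)
    (hU : U = M lam₁ * X * (lam₁ • (1 : Matrix (Fin p) (Fin p) ℂ) - S)⁻¹)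
    (hU' : U' = -(M lam₁ * X * ((lam₁ • (1 : Matrix (Fin p) (Fin p) ℂ) - S)⁻¹ ^ 2))
      + M' lam₁ * X * (lam₁ • (1 : Matrix (Fin p) (Fin p) ℂ) - S)⁻¹)
    (v : Fin n → ℂ) (hv : v = v₁ - X *ᵥ (Xᴴ *ᵥ v₁))
    (u : Fin p → ℂ)
    (hu : u = (lam₁ • (1 : Matrix (Fin p) (Fin p) ℂ) - S) *ᵥ (Xᴴ *ᵥ v₁))
    (J : Matrix (Fin n ⊕ (Fin p ⊕ Fin 1)) (Fin n ⊕ (Fin p ⊕ Fin 1)) ℂ)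
    (hJ : J = fromBlocks (M lam₁)
      (fromCols U (Matrix.replicateCol (Fin 1) (M' lam₁ *ᵥ v + U' *ᵥ u)))
      (fromRows Xᴴ (Matrix.replicateRow (Fin 1) (star c))) 0)
    (hsing : ¬ IsUnit J.det) :
    ∃ v₂ : Fin n → ℂ, M lam₁ *ᵥ v₂ + M' lam₁ *ᵥ v₁ = 0 :=
  jordan_chain_of_jacobian_singular_general n p M M' X S lam₁ hS v₁ hker c hBord U U' hU hU' v hv u
    hu J hJ hsing
end

section
/- If a singular vector (z₁, z₂, z₃) of the Jacobian J above has z₃ = 0, then under the assumptions that ker M(λ₁) = span{v₁} and [Xᴴ;cᴴ][X, v₁] is invertible, necessarily z₁ = 0 and z₂ = 0. Hence every nontrivial null vector of J has nonzero last component. -/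
/-!
Write `A = λ₁I - S` and `w = A⁻¹z₂`. With `z₃ = 0` the first block row says `M(λ₁)(z₁ + Xw) = 0`,
so `z₁ = αv₁ - Xw` for some `α`. The remaining rows say that `[Xᴴ; cᴴ] z₁ = 0`, i.e. that
`(-w, α)` is a null vector of the invertible bordered matrix `[Xᴴ; cᴴ][X, v₁]`. Hence `w = 0`
and `α = 0`, so `z₁ = 0` and `z₂ = Aw = 0`.
-/

open Matrix

namespace Matrix

variable {m n K : Type*} [Fintype m] [DecidableEq m] [Fintype n] [CommRing K]

theorem eq_zero_of_isUnit_det_fromRows_mul_fromCols {Y : Matrix m n K} {r : n → K}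
    {X : Matrix n m K} {v : n → K}
    (hB : IsUnit (fromRows Y (replicateRow (Fin 1) r) * fromCols X (replicateCol (Fin 1) v)).det)
    {w : m → K} {a : K} (hY : Y *ᵥ (X *ᵥ w + a • v) = 0) (hr : r ⬝ᵥ (X *ᵥ w + a • v) = 0) :
    w = 0 ∧ a = 0 := by
  have hcols : fromCols X (replicateCol (Fin 1) v) *ᵥ Sum.elim w (fun _ ↦ a) = X *ᵥ w + a • v := by
    rw [fromCols_mulVec_sumElim]
    congr 1
    ext i
    simp [mulVec, dotProduct, mul_comm]
  have hnull : (fromRows Y (replicateRow (Fin 1) r) * fromCols X (replicateCol (Fin 1) v)) *ᵥ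
      Sum.elim w (fun _ ↦ a) = 0 := by
    rw [← mulVec_mulVec, hcols, fromRows_mulVec, hY, replicateRow_mulVec_eq_const, hr]
    ext (_ | _) <;> rfl
  have h := eq_zero_of_det_mem_nonZeroDivisors_of_mulVec_eq_zero hB.mem_nonZeroDivisors hnull
  exact ⟨funext fun i ↦ congrFun h (.inl i), congrFun h (.inr 0)⟩

end Matrix

theorem null_vector_with_zero_last_component_is_trivial_general (n p : ℕ)
    (M₁ : Matrix (Fin n) (Fin n) ℂ)
    (X : Matrix (Fin n) (Fin p) ℂ) (S : Matrix (Fin p) (Fin p) ℂ)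
    (lam₁ : ℂ) (hS : IsUnit ((lam₁ • (1 : Matrix (Fin p) (Fin p) ℂ) - S).det))
    (U : Matrix (Fin n) (Fin p) ℂ)
    (hU : U = M₁ * X * (lam₁ • (1 : Matrix (Fin p) (Fin p) ℂ) - S)⁻¹)
    (f : Fin n → ℂ)
    (v₁ : Fin n → ℂ)
    (hker : ∀ w : Fin n → ℂ, M₁ *ᵥ w = 0 → ∃ α : ℂ, w = α • v₁)
    (c : Fin n → ℂ)
    (hBord : IsUnit ((fromRows Xᴴ (Matrix.replicateRow (Fin 1) (star c)) *
      fromCols X (Matrix.replicateCol (Fin 1) v₁)).det))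
    (z₁ : Fin n → ℂ) (z₂ : Fin p → ℂ) (z₃ : ℂ) (hz₃ : z₃ = 0)
    (hrow1 : M₁ *ᵥ z₁ + U *ᵥ z₂ + z₃ • f = 0)
    (hrow2 : Xᴴ *ᵥ z₁ = 0)
    (hrow3 : star c ⬝ᵥ z₁ = 0) :
    z₁ = 0 ∧ z₂ = 0 := by
  subst hz₃ hU
  set A := lam₁ • (1 : Matrix (Fin p) (Fin p) ℂ) - S
  set w := A⁻¹ *ᵥ z₂
  have hkernel : M₁ *ᵥ (z₁ + X *ᵥ w) = 0 := by
    rwa [zero_smul, add_zero, ← mulVec_mulVec, ← mulVec_mulVec, ← mulVec_add] at hrow1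
  obtain ⟨α, hα⟩ := hker _ hkernel
  have hz₁ : z₁ = X *ᵥ (-w) + α • v₁ := by
    rw [mulVec_neg, ← hα]
    abel
  rw [hz₁] at hrow2 hrow3 ⊢
  obtain ⟨hw, rfl⟩ := eq_zero_of_isUnit_det_fromRows_mul_fromCols hBord hrow2 hrow3
  have hz₂ : z₂ = A *ᵥ w := by rw [mulVec_mulVec, mul_nonsing_inv A hS, one_mulVec]
  rw [neg_eq_zero.mp hw] at hz₂
  simp [hw, hz₂]

/-- Any null vector `(z₁, z₂, z₃)` of the structured Jacobian with `z₃ = 0` is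
trivial; hence every nontrivial null vector has nonzero last component. -/
theorem null_vector_with_zero_last_component_is_trivial (n p : ℕ)
    (M₁ : Matrix (Fin n) (Fin n) ℂ)
    (X : Matrix (Fin n) (Fin p) ℂ) (S : Matrix (Fin p) (Fin p) ℂ)
    (hX : Xᴴ * X = 1)
    (lam₁ : ℂ) (hS : IsUnit ((lam₁ • (1 : Matrix (Fin p) (Fin p) ℂ) - S).det))
    (U : Matrix (Fin n) (Fin p) ℂ)
    (hU : U = M₁ * X * (lam₁ • (1 : Matrix (Fin p) (Fin p) ℂ) - S)⁻¹)
    (f : Fin n → ℂ)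
    (v₁ : Fin n → ℂ) (hv₁ : M₁ *ᵥ v₁ = 0) (hv₁ne : v₁ ≠ 0)
    (hker : ∀ w : Fin n → ℂ, M₁ *ᵥ w = 0 → ∃ α : ℂ, w = α • v₁)
    (c : Fin n → ℂ)
    (hBord : IsUnit ((fromRows Xᴴ (Matrix.replicateRow (Fin 1) (star c)) *
      fromCols X (Matrix.replicateCol (Fin 1) v₁)).det))
    (z₁ : Fin n → ℂ) (z₂ : Fin p → ℂ) (z₃ : ℂ) (hz₃ : z₃ = 0)
    (hrow1 : M₁ *ᵥ z₁ + U *ᵥ z₂ + z₃ • f = 0)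
    (hrow2 : Xᴴ *ᵥ z₁ = 0)
    (hrow3 : star c ⬝ᵥ z₁ = 0) :
    z₁ = 0 ∧ z₂ = 0 :=
  null_vector_with_zero_last_component_is_trivial_general n p M₁ X S lam₁ hS U hU f v₁ hker c hBord
    z₁ z₂ z₃ hz₃ hrow1 hrow2 hrow3
end

section
/- Block upper-triangular extension of an invariant pair: if (X,S) satisfies Σᵢ Mᵢ X Sⁱ = 0 and (v, u, λ) satisfies Σᵢ Mᵢ (X qᵢ(S,u,λ) + v λⁱ) = 0 where the extended pair is X̂ = [X, v], Ŝ = [[S, u],[0, λ]], then (X̂, Ŝ) satisfies Σᵢ Mᵢ X̂ Ŝⁱ = 0, where the top-right block of Ŝⁱ is qᵢ(S,u,λ) := Σ_{j=0}^{i−1} S^j u λ^{i−1−j}. -/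
/-!
Since `Ŝ` is block upper triangular, `Ŝ ^ i = [[S ^ i, qᵢ], [0, λ ^ i]]`, hence
`X̂ Ŝ ^ i = [X S ^ i, X qᵢ + λ ^ i v]`. Multiplying by `Mᵢ` and summing, the two block columns
of `Σᵢ Mᵢ X̂ Ŝ ^ i` are exactly the left-hand sides of the two hypotheses.
-/

open Matrix

namespace Matrix

open Finset

variable {ι l m n α : Type*}

theorem replicateCol_sum [AddCommMonoid α] (s : Finset ι) (v : ι → m → α) :
    replicateCol n (∑ i ∈ s, v i) = ∑ i ∈ s, replicateCol n (v i) := by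
  ext
  simp [Matrix.sum_apply]

theorem fromCols_sum [AddCommMonoid α] (s : Finset ι) (A : ι → Matrix l m α)
    (B : ι → Matrix l n α) :
    ∑ i ∈ s, fromCols (A i) (B i) = fromCols (∑ i ∈ s, A i) (∑ i ∈ s, B i) := by
  ext x (y | y) <;> simp [Matrix.sum_apply]

theorem fromCols_replicateCol_mul_fromBlocks_smul_one [Fintype m] [Fintype ι] [DecidableEq ι]
    [CommSemiring α] (X : Matrix l m α) (v : l → α) (T : Matrix m m α) (w : m → α) (c : α) :
    fromCols X (replicateCol ι v) * fromBlocks T (replicateCol ι w) 0 (c • 1 : Matrix ι ι α) =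
      fromCols (X * T) (replicateCol ι (X *ᵥ w + c • v)) := by
  rw [fromCols_mul_fromBlocks, Matrix.mul_zero, add_zero, Matrix.mul_smul, Matrix.mul_one,
    replicateCol_add, replicateCol_mulVec, replicateCol_smul]

variable [Fintype m] [Fintype n] [DecidableEq m] [DecidableEq n]

theorem fromBlocks_zero₂₁_pow [Semiring α] (A : Matrix m m α) (B : Matrix m n α)
    (D : Matrix n n α) (i : ℕ) :
    fromBlocks A B 0 D ^ i =
      fromBlocks (A ^ i) (∑ j ∈ range i, A ^ j * B * D ^ (i - 1 - j)) 0 (D ^ i) := by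
  induction i with
  | zero => simp [fromBlocks_one]
  | succ i ih =>
    have hcorner : A ^ i * B + (∑ j ∈ range i, A ^ j * B * D ^ (i - 1 - j)) * D =
        ∑ j ∈ range (i + 1), A ^ j * B * D ^ (i + 1 - 1 - j) := by
      rw [sum_range_succ, Matrix.sum_mul, add_comm]
      congr 1
      · refine Finset.sum_congr rfl fun j hj => ?_
        rw [Matrix.mul_assoc, ← pow_succ]
        congr 2
        have := mem_range.mp hj
        omega
      · simp
    rw [pow_succ, ih, fromBlocks_multiply, hcorner]
    simp [pow_succ]

theorem fromBlocks_replicateCol_smul_one_pow [Fintype ι] [DecidableEq ι] [CommSemiring α]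
    (A : Matrix m m α) (u : m → α) (c : α) (i : ℕ) :
    fromBlocks A (replicateCol ι u) 0 (c • 1 : Matrix ι ι α) ^ i =
      fromBlocks (A ^ i) (replicateCol ι (∑ j ∈ range i, c ^ (i - 1 - j) • (A ^ j *ᵥ u))) 0
        (c ^ i • 1) := by
  simp only [fromBlocks_zero₂₁_pow, smul_pow, one_pow, Matrix.mul_smul, Matrix.mul_one,
    replicateCol_sum, replicateCol_smul, replicateCol_mulVec]

end Matrix

/-- Block upper-triangular extension of an invariant pair of a polynomial NEP:
if `(X,S)` is an invariant pair and `(v,u,λ)` satisfies the extension equation,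
then `(X̂, Ŝ)` with `X̂ = [X, v]`, `Ŝ = [[S, u],[0, λ]]` is an invariant pair. -/
theorem invariant_pair_extension (n p m : ℕ)
    (M : ℕ → Matrix (Fin n) (Fin n) ℂ)
    (X : Matrix (Fin n) (Fin p) ℂ) (S : Matrix (Fin p) (Fin p) ℂ)
    (v : Fin n → ℂ) (u : Fin p → ℂ) (lam : ℂ)
    (hpair : ∑ i ∈ Finset.range (m + 1), M i * X * S ^ i = 0)
    (q : ℕ → Fin p → ℂ)
    (hq : ∀ i, q i = ∑ j ∈ Finset.range i, lam ^ (i - 1 - j) • (S ^ j *ᵥ u))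
    (hext : ∑ i ∈ Finset.range (m + 1), M i *ᵥ (X *ᵥ q i + lam ^ i • v) = 0)
    (Xhat : Matrix (Fin n) (Fin p ⊕ Fin 1) ℂ)
    (hX : Xhat = fromCols X (Matrix.replicateCol (Fin 1) v))
    (Shat : Matrix (Fin p ⊕ Fin 1) (Fin p ⊕ Fin 1) ℂ)
    (hS : Shat = fromBlocks S (Matrix.replicateCol (Fin 1) u) 0
      (lam • (1 : Matrix (Fin 1) (Fin 1) ℂ))) :
    ∑ i ∈ Finset.range (m + 1), M i * Xhat * Shat ^ i = 0 := by
  have hterm : ∀ i, M i * Xhat * Shat ^ i =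
      fromCols (M i * X * S ^ i) (replicateCol (Fin 1) (M i *ᵥ (X *ᵥ q i + lam ^ i • v))) := by
    intro i
    rw [hX, hS, Matrix.mul_assoc, fromBlocks_replicateCol_smul_one_pow, ← hq,
      fromCols_replicateCol_mul_fromBlocks_smul_one, mul_fromCols, replicateCol_mulVec,
      Matrix.mul_assoc]
  rw [Finset.sum_congr rfl fun i _ => hterm i, fromCols_sum, hpair, ← replicateCol_sum, hext,
    replicateCol_zero, fromCols_zero]
end
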